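/- Let G be a group, K₁ and K₂ sets, K = K₁ ⊕ K₂ their disjoint union, and ∂₀ : K → G a map with ∂₀(m) = 1 for every m ∈ K₂. Let ∂₀¹ : K₁ → G be the restriction of ∂₀ to K₁. Let (G, E, ∂, ▷) be the free crossed module on ∂₀ and (G, E¹, ∂¹, ▷¹) the free crossed module on ∂₀¹, and let F₁ be the subgroup of E generated by {X ▷ ⟦1,m⟧ : X ∈ G, m ∈ K₁}. Then the group homomorphism Φ : E¹ → E determined by Φ⟦X,m⟧ = ⟦X, m⟧ (viewing m ∈ K₁ inside K) is injective with image F₁, satisfies ∂ ∘ Φ = ∂¹, and is G-equivariant: Φ(X ▷¹ e) = X ▷ Φ(e) for all X ∈ G, e ∈ E¹. -/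

import Mathlib

/-- The defining relations of the principal group of the free crossed module on a map
`d0 : K → G`. -/
def crossedRels {G K : Type*} [Group G] (d0 : K → G) : Set (FreeGroup (G × K)) :=
  {r | ∃ (X Y : G) (m n : K),
    r = FreeGroup.of (X, m) * FreeGroup.of (Y, n) * (FreeGroup.of (X, m))⁻¹ *
        (FreeGroup.of (X * d0 m * X⁻¹ * Y, n))⁻¹}

/-- The principal group `E(d0)` of the free crossed module on `d0 : K → G`. -/
abbrev FreeCMGroup {G K : Type*} [Group G] (d0 : K → G) : Type _ :=
  PresentedGroup (crossedRels d0)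

/-- The class `⟦X, m⟧` of the generator `(X, m)` in `E(d0)`. -/
def cmGen {G K : Type*} [Group G] (d0 : K → G) (X : G) (m : K) : FreeCMGroup d0 :=
  PresentedGroup.of (X, m)

/-!
The inclusion `K₁ → K₁ ⊕ K₂` induces `Φ : E(∂₀¹) → E(∂₀)` on the presented groups. Since
`∂₀` is trivial on `K₂`, sending `⟦X, m⟧` to `⟦X, m⟧` for `m ∈ K₁` and to `1` for `m ∈ K₂`
respects the relations of `E(∂₀)` and gives a retraction of `Φ`, so `Φ` is injective. The
remaining claims only need to be checked on generators, where `X ▷ ⟦1, m⟧ = ⟦X, m⟧`.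
-/

namespace FreeCMGroup

variable {G K K' H : Type*} [Group G] [Group H]

theorem cmGen_mul_cmGen_mul_inv (d0 : K → G) (X Y : G) (m n : K) :
    cmGen d0 X m * cmGen d0 Y n * (cmGen d0 X m)⁻¹ = cmGen d0 (X * d0 m * X⁻¹ * Y) n := by
  have h : PresentedGroup.mk (crossedRels d0)
      (FreeGroup.of (X, m) * FreeGroup.of (Y, n) * (FreeGroup.of (X, m))⁻¹ *
        (FreeGroup.of (X * d0 m * X⁻¹ * Y, n))⁻¹) = 1 :=
    (QuotientGroup.eq_one_iff _).2 (Subgroup.subset_normalClosure ⟨X, Y, m, n, rfl⟩)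
  rw [map_mul, map_inv, mul_inv_eq_one] at h
  exact h

section

variable {d0 : K → G}

theorem hom_ext {f g : FreeCMGroup d0 →* H}
    (h : ∀ (X : G) (m : K), f (cmGen d0 X m) = g (cmGen d0 X m)) : f = g :=
  PresentedGroup.ext fun ⟨X, m⟩ => h X m

def lift (f : G → K → H)
    (hf : ∀ (X Y : G) (m n : K), f X m * f Y n * (f X m)⁻¹ = f (X * d0 m * X⁻¹ * Y) n) :
    FreeCMGroup d0 →* H :=
  PresentedGroup.toGroup (f := fun p : G × K => f p.1 p.2) <| by
    rintro _ ⟨X, Y, m, n, rfl⟩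
    simp only [map_mul, map_inv, FreeGroup.lift_apply_of, hf, mul_inv_cancel]

@[simp]
theorem lift_cmGen (f : G → K → H)
    (hf : ∀ (X Y : G) (m n : K), f X m * f Y n * (f X m)⁻¹ = f (X * d0 m * X⁻¹ * Y) n)
    (X : G) (m : K) : lift f hf (cmGen d0 X m) = f X m :=
  PresentedGroup.toGroup.of _

theorem range_eq_closure_image_cmGen (f : FreeCMGroup d0 →* H) :
    f.range = Subgroup.closure {x | ∃ (X : G) (m : K), x = f (cmGen d0 X m)} := by
  have himage : {x | ∃ (X : G) (m : K), x = f (cmGen d0 X m)} =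
      f '' Set.range (PresentedGroup.of (rels := crossedRels d0)) := by
    ext x
    constructor
    · rintro ⟨X, m, rfl⟩
      exact ⟨_, ⟨(X, m), rfl⟩, rfl⟩
    · rintro ⟨_, ⟨⟨X, m⟩, rfl⟩, rfl⟩
      exact ⟨X, m, rfl⟩
  rw [himage, ← MonoidHom.map_closure, PresentedGroup.closure_range_of, MonoidHom.range_eq_map]

variable {d0' : K' → G}

def map (j : K' → K) (hj : ∀ m, d0' m = d0 (j m)) : FreeCMGroup d0' →* FreeCMGroup d0 :=
  lift (fun X m => cmGen d0 X (j m)) fun X Y m n => by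
    rw [hj]
    exact cmGen_mul_cmGen_mul_inv d0 X Y (j m) (j n)

@[simp]
theorem map_cmGen (j : K' → K) (hj : ∀ m, d0' m = d0 (j m)) (X : G) (m : K') :
    map j hj (cmGen d0' X m) = cmGen d0 X (j m) :=
  lift_cmGen _ _ X m

theorem range_map (j : K' → K) (hj : ∀ m, d0' m = d0 (j m)) :
    (map j hj).range = Subgroup.closure {x | ∃ (X : G) (m : K'), x = cmGen d0 X (j m)} := by
  simp only [range_eq_closure_image_cmGen, map_cmGen]

theorem comp_map_of_cmGen (j : K' → K) (hj : ∀ m, d0' m = d0 (j m))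
    (δ : FreeCMGroup d0 →* G) (hδ : ∀ (X : G) (m : K), δ (cmGen d0 X m) = X * d0 m * X⁻¹)
    (δ' : FreeCMGroup d0' →* G)
    (hδ' : ∀ (X : G) (m : K'), δ' (cmGen d0' X m) = X * d0' m * X⁻¹) :
    δ.comp (map j hj) = δ' :=
  hom_ext fun X m => by rw [MonoidHom.comp_apply, map_cmGen, hδ, hδ', hj]

theorem map_apply_of_cmGen (j : K' → K) (hj : ∀ m, d0' m = d0 (j m))
    (ρ : G →* MulAut (FreeCMGroup d0))
    (hρ : ∀ (X Y : G) (m : K), ρ X (cmGen d0 Y m) = cmGen d0 (X * Y) m)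
    (ρ' : G →* MulAut (FreeCMGroup d0'))
    (hρ' : ∀ (X Y : G) (m : K'), ρ' X (cmGen d0' Y m) = cmGen d0' (X * Y) m)
    (X : G) (e : FreeCMGroup d0') : map j hj (ρ' X e) = ρ X (map j hj e) := by
  have h : (map j hj).comp (ρ' X).toMonoidHom = (ρ X).toMonoidHom.comp (map j hj) :=
    hom_ext fun Y m => by simp only [MonoidHom.comp_apply, MulEquiv.coe_toMonoidHom, hρ, hρ',
      map_cmGen]
  exact DFunLike.congr_fun h e

end

section Sum

variable {K1 K2 : Type*} {d0 : K1 ⊕ K2 → G} {d01 : K1 → G}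

def retractInl (h2 : ∀ m : K2, d0 (Sum.inr m) = 1) (hd01 : ∀ m : K1, d01 m = d0 (Sum.inl m)) :
    FreeCMGroup d0 →* FreeCMGroup d01 :=
  lift (fun X => Sum.elim (cmGen d01 X) fun _ => 1) <| by
    rintro X Y (m | m) (n | n)
    · simpa only [Sum.elim_inl, hd01] using cmGen_mul_cmGen_mul_inv d01 X Y m n
    · simp only [Sum.elim_inr, mul_one, mul_inv_cancel]
    · simp only [Sum.elim_inl, Sum.elim_inr, h2, mul_one, mul_inv_cancel, one_mul, inv_one]
    · simp only [Sum.elim_inr, mul_one, inv_one]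

theorem retractInl_comp_map_inl (h2 : ∀ m : K2, d0 (Sum.inr m) = 1)
    (hd01 : ∀ m : K1, d01 m = d0 (Sum.inl m)) :
    (retractInl h2 hd01).comp (map Sum.inl hd01) = MonoidHom.id _ :=
  hom_ext fun X m => by
    simp only [retractInl, MonoidHom.comp_apply, map_cmGen, lift_cmGen, Sum.elim_inl,
      MonoidHom.id_apply]

theorem map_inl_injective (h2 : ∀ m : K2, d0 (Sum.inr m) = 1)
    (hd01 : ∀ m : K1, d01 m = d0 (Sum.inl m)) :
    Function.Injective (map Sum.inl hd01) :=
  Function.LeftInverse.injective (g := retractInl h2 hd01) fun e =>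
    DFunLike.congr_fun (retractInl_comp_map_inl h2 hd01) e

end Sum

end FreeCMGroup

open FreeCMGroup in
/-- Let `G` be a group, `K = K₁ ⊕ K₂`, and `d0 : K → G` a map with
`d0 m = 1` for every `m ∈ K₂`; let `d0¹ : K₁ → G` be the restriction of `d0` to `K₁`.  Let
`(G, E, δ, ρ)` be the free crossed module on `d0` and `(G, E¹, δ¹, ρ¹)` the free crossed
module on `d0¹`, and let `F₁ ≤ E` be the subgroup generated by `{ρ X ⟦1,m⟧ : X ∈ G, m ∈ K₁}`.
Then the group homomorphism `Φ : E¹ →* E` determined by `Φ ⟦X,m⟧ = ⟦X, inl m⟧` exists, is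
injective with image `F₁`, satisfies `δ ∘ Φ = δ¹`, and is `G`-equivariant. -/
theorem freeCrossedModule_F1_free {G K1 K2 : Type*} [Group G]
    (d0 : K1 ⊕ K2 → G) (h2 : ∀ m : K2, d0 (Sum.inr m) = 1)
    (d01 : K1 → G) (hd01 : ∀ m : K1, d01 m = d0 (Sum.inl m))
    (δ : FreeCMGroup d0 →* G) (ρ : G →* MulAut (FreeCMGroup d0))
    (hδ : ∀ (X : G) (m : K1 ⊕ K2), δ (cmGen d0 X m) = X * d0 m * X⁻¹)
    (hρ : ∀ (X Y : G) (m : K1 ⊕ K2), ρ X (cmGen d0 Y m) = cmGen d0 (X * Y) m)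
    (δ1 : FreeCMGroup d01 →* G) (ρ1 : G →* MulAut (FreeCMGroup d01))
    (hδ1 : ∀ (X : G) (m : K1), δ1 (cmGen d01 X m) = X * d01 m * X⁻¹)
    (hρ1 : ∀ (X Y : G) (m : K1), ρ1 X (cmGen d01 Y m) = cmGen d01 (X * Y) m)
    (F1 : Subgroup (FreeCMGroup d0))
    (hF1 : F1 = Subgroup.closure
      {x | ∃ (X : G) (m : K1), x = ρ X (cmGen d0 1 (Sum.inl m))}) :
    (∃ Φ : FreeCMGroup d01 →* FreeCMGroup d0,
      ∀ (X : G) (m : K1), Φ (cmGen d01 X m) = cmGen d0 X (Sum.inl m)) ∧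
    (∀ Φ : FreeCMGroup d01 →* FreeCMGroup d0,
      (∀ (X : G) (m : K1), Φ (cmGen d01 X m) = cmGen d0 X (Sum.inl m)) →
      Function.Injective Φ ∧
      Φ.range = F1 ∧
      δ.comp Φ = δ1 ∧
      (∀ (X : G) (e : FreeCMGroup d01), Φ (ρ1 X e) = ρ X (Φ e))) := by
  refine ⟨⟨map Sum.inl hd01, map_cmGen Sum.inl hd01⟩, fun Φ hΦ => ?_⟩
  obtain rfl : Φ = map Sum.inl hd01 := hom_ext fun X m => by rw [hΦ, map_cmGen]
  refine ⟨map_inl_injective h2 hd01, ?_, comp_map_of_cmGen _ hd01 δ hδ δ1 hδ1,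
    map_apply_of_cmGen _ hd01 ρ hρ ρ1 hρ1⟩
  simp only [hF1, hρ, mul_one, range_map]
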